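/- In the two-way crossed model with interaction, define for each cell (i,j) the cell-level linear EBLUP-error term R_{ij} = ē_{ij} − g^{-1}Σ_{s=1}^g Ĥ^{(a)}_{is}·α_s − h^{-1}Σ_{t=1}^h Ĥ^{(b)}_{jt}·β_t (which equals the sum of the row, column and interaction linear error terms). Then for all cells (i,j) and (i',j'), Cov(R_{ij}, R_{i'j'}) = 𝟙{i = i'}·𝟙{j = j'}·σe²/m + (σα²/g)·Ĥ^{(a)}_{ii'} + (σβ²/h)·Ĥ^{(b)}_{jj'}. In particular the cell-level terms are correlated even when i ≠ i' and j ≠ j', and these exact covariances give the asymptotic covariance matrix of the paper's Corollary on cell-level EBLUPs in the interaction model. -/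

import Mathlib

open Matrix MeasureTheory ProbabilityTheory BigOperators

/-- Covariance `Cov(X,Y) = E[XY] − E[X]E[Y]` of two real random variables. -/
noncomputable def Cov {Ω : Type*} [MeasureSpace Ω] (X Y : Ω → ℝ) : ℝ :=
  (∫ ω, X ω * Y ω) - (∫ ω, X ω) * (∫ ω, Y ω)

/-- Centered row covariate `x_{s(c)} = x_s − x̄` where `x̄ = g⁻¹ Σ_s x_s`. -/
noncomputable def xc (g p : ℕ) (x : Fin g → Fin p → ℝ) (s : Fin g) : Fin p → ℝ :=
  x s - (g : ℝ)⁻¹ • ∑ u : Fin g, x u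

/-- `D̂ = g⁻¹ Σ_s x_{s(c)} x_{s(c)}ᵀ`. -/
noncomputable def Dhat (g p : ℕ) (x : Fin g → Fin p → ℝ) : Matrix (Fin p) (Fin p) ℝ :=
  (g : ℝ)⁻¹ • ∑ s : Fin g, vecMulVec (xc g p x s) (xc g p x s)

/-- `Ĥ^{(a)}_{su} = 1 + x_{s(c)}ᵀ D̂⁻¹ x_{u(c)}`. -/
noncomputable def Hhat (g p : ℕ) (x : Fin g → Fin p → ℝ) (s u : Fin g) : ℝ :=
  1 + xc g p x s ⬝ᵥ ((Dhat g p x)⁻¹ *ᵥ xc g p x u)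

/-- Centered column covariate `w_{t(c)} = w_t − w̄` where `w̄ = h⁻¹ Σ_t w_t`. -/
noncomputable def wc (h q : ℕ) (w : Fin h → Fin q → ℝ) (t : Fin h) : Fin q → ℝ :=
  w t - (h : ℝ)⁻¹ • ∑ v : Fin h, w v

/-- `D̂_b = h⁻¹ Σ_t w_{t(c)} w_{t(c)}ᵀ`. -/
noncomputable def Dhatb (h q : ℕ) (w : Fin h → Fin q → ℝ) : Matrix (Fin q) (Fin q) ℝ :=
  (h : ℝ)⁻¹ • ∑ t : Fin h, vecMulVec (wc h q w t) (wc h q w t)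

/-- `Ĥ^{(b)}_{tv} = 1 + w_{t(c)}ᵀ D̂_b⁻¹ w_{v(c)}`. -/
noncomputable def Hhatb (h q : ℕ) (w : Fin h → Fin q → ℝ) (t v : Fin h) : ℝ :=
  1 + wc h q w t ⬝ᵥ ((Dhatb h q w)⁻¹ *ᵥ wc h q w v)

lemma dot_sum {n : Type*} [Fintype n] {ι : Type*} (s : Finset ι) (u : n → ℝ) (f : ι → n → ℝ) :
    u ⬝ᵥ (∑ i ∈ s, f i) = ∑ i ∈ s, u ⬝ᵥ f i := by
  simp only [dotProduct, Finset.sum_apply, Finset.mul_sum]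
  exact Finset.sum_comm

-- helper: mulVec of a sum
lemma mulVec_sum' {n : Type*} [Fintype n] {ι : Type*} (s : Finset ι)
    (M : Matrix n n ℝ) (f : ι → n → ℝ) :
    M *ᵥ (∑ i ∈ s, f i) = ∑ i ∈ s, M *ᵥ f i := by
  exact map_sum (Matrix.mulVecLin M) f s

example {n : Type*} [Fintype n] [DecidableEq n] (M : Matrix n n ℝ) (hM : IsUnit M.det)
    (v : n → ℝ) : M *ᵥ (M⁻¹ *ᵥ v) = v := by
  rw [Matrix.mulVec_mulVec, Matrix.mul_nonsing_inv _ hM, Matrix.one_mulVec]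

-- L2 * L2 integrable
lemma integrable_mul_of_memL2 {Ω : Type*} [MeasureSpace Ω] [IsProbabilityMeasure (ℙ : Measure Ω)]
    {f g : Ω → ℝ} (hf : MemLp f 2 ℙ) (hg : MemLp g 2 ℙ) :
    Integrable (fun ω => f ω * g ω) ℙ := by
  have h : MemLp (f • g) 1 ℙ := hg.smul hf (hpqr := ⟨by
    rw [inv_one]
    exact ENNReal.inv_two_add_inv_two⟩)
  exact memLp_one_iff_integrable.mp h

lemma cov_sum_eq {Ω : Type*} [MeasureSpace Ω] [IsProbabilityMeasure (ℙ : Measure Ω)]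
    {ι : Type*} [Fintype ι] (Z : ι → Ω → ℝ)
    (hindep : iIndepFun Z ℙ)
    (hL2 : ∀ i, MemLp (Z i) 2 ℙ) (h0 : ∀ i, ∫ ω, Z i ω = 0) (c d : ι → ℝ) :
    Cov (fun ω => ∑ i, c i * Z i ω) (fun ω => ∑ i, d i * Z i ω)
      = ∑ i, c i * d i * Cov (Z i) (Z i) := by
  classical
  have hint : ∀ i : ι, Integrable (Z i) ℙ := fun i => (hL2 i).integrable one_le_two
  have hmul : ∀ i j : ι, Integrable (fun ω => Z i ω * Z j ω) ℙ := fun i j =>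
    integrable_mul_of_memL2 (hL2 i) (hL2 j)
  have hIij : ∀ i j : ι, (∫ ω, Z i ω * Z j ω) = (if i = j then Cov (Z i) (Z i) else 0) := by
    intro i j
    by_cases hij : i = j
    · subst hij; simp [Cov, h0 i]
    · simp only [hij, if_false]
      have h := (hindep.indepFun hij).integral_mul_eq_mul_integral
        (hint i).aestronglyMeasurable (hint j).aestronglyMeasurable
      calc (∫ ω, Z i ω * Z j ω) = ∫ ω, (Z i * Z j) ω := rfl
        _ = (∫ ω, Z i ω) * ∫ ω, Z j ω := h
        _ = 0 := by rw [h0 i, h0 j]; ring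
  have hX : ∀ ω : Ω, (∑ i, c i * Z i ω) * (∑ j, d j * Z j ω)
      = ∑ i, ∑ j, (c i * d j) * (Z i ω * Z j ω) := by
    intro ω
    rw [Finset.sum_mul_sum]
    exact Finset.sum_congr rfl fun i _ => Finset.sum_congr rfl fun j _ => by ring
  have h1 : (∫ ω, (∑ i, c i * Z i ω) * (∑ j, d j * Z j ω))
      = ∑ i, ∑ j, (c i * d j) * ∫ ω, Z i ω * Z j ω := by
    simp_rw [hX]
    rw [integral_finset_sum _ (fun i _ =>
      integrable_finset_sum _ (fun j _ => ((hmul i j).const_mul _)))]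
    refine Finset.sum_congr rfl fun i _ => ?_
    rw [integral_finset_sum _ (fun j _ => ((hmul i j).const_mul _))]
    exact Finset.sum_congr rfl fun j _ => integral_const_mul _ _
  have h2 : (∫ ω, ∑ i, c i * Z i ω) = 0 := by
    rw [integral_finset_sum _ (fun i _ => (hint i).const_mul _)]
    simp [integral_const_mul, h0]
  have h3 : (∫ ω, ∑ i, d i * Z i ω) = 0 := by
    rw [integral_finset_sum _ (fun i _ => (hint i).const_mul _)]
    simp [integral_const_mul, h0]
  show (∫ ω, (∑ i, c i * Z i ω) * (∑ j, d j * Z j ω))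
      - (∫ ω, ∑ i, c i * Z i ω) * (∫ ω, ∑ j, d j * Z j ω) = _
  rw [h1, h2, h3, mul_zero, sub_zero]
  simp only [hIij, mul_ite, mul_zero]
  refine Finset.sum_congr rfl fun i _ => ?_
  rw [Finset.sum_ite_eq Finset.univ i (fun j => c i * d j * Cov (Z i) (Z i))]
  simp [mul_comm]

lemma sum_xc (g p : ℕ) (hg : 1 ≤ g) (x : Fin g → Fin p → ℝ) :
    ∑ s : Fin g, xc g p x s = 0 := by
  have hgne : (g : ℝ) ≠ 0 := Nat.cast_ne_zero.mpr (by omega)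
  unfold xc
  rw [Finset.sum_sub_distrib, Finset.sum_const, Finset.card_univ, Fintype.card_fin]
  rw [← Nat.cast_smul_eq_nsmul ℝ, smul_smul, mul_inv_cancel₀ hgne, one_smul, sub_self]

lemma Dhat_symm (g p : ℕ) (x : Fin g → Fin p → ℝ) : (Dhat g p x)ᵀ = Dhat g p x := by
  ext r c
  simp [Dhat, Matrix.transpose_apply, Matrix.smul_apply, Matrix.sum_apply,
    Matrix.vecMulVec_apply, mul_comm]

lemma sum_vecMulVec (g p : ℕ) (hg : 1 ≤ g) (x : Fin g → Fin p → ℝ) :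
    ∑ s : Fin g, vecMulVec (xc g p x s) (xc g p x s) = (g : ℝ) • Dhat g p x := by
  have hgne : (g : ℝ) ≠ 0 := Nat.cast_ne_zero.mpr (by omega)
  rw [Dhat, smul_smul, mul_inv_cancel₀ hgne, one_smul]

lemma sum_matrix_mulVec {n : Type*} [Fintype n] {ι : Type*} (s : Finset ι)
    (M : ι → Matrix n n ℝ) (v : n → ℝ) :
    ∑ i ∈ s, M i *ᵥ v = (∑ i ∈ s, M i) *ᵥ v := by
  ext r
  simp only [Matrix.mulVec, dotProduct, Finset.sum_apply, Matrix.sum_apply,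
    Finset.sum_mul]
  exact Finset.sum_comm

lemma sum_Hhat_mul (g p : ℕ) (hg : 1 ≤ g) (x : Fin g → Fin p → ℝ)
    (hDa : IsUnit (Dhat g p x).det) (i i' : Fin g) :
    ∑ s : Fin g, Hhat g p x i s * Hhat g p x i' s = (g : ℝ) * Hhat g p x i i' := by
  classical
  set D := Dhat g p x with hD
  set a : Fin g → Fin p → ℝ := xc g p x with ha
  have hsum0 : ∑ s : Fin g, a s = 0 := sum_xc g p hg x
  have hinv_symm : (D⁻¹)ᵀ = D⁻¹ := by
    rw [Matrix.transpose_nonsing_inv, Dhat_symm]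
  -- B s symmetric form
  have hBsym : ∀ s, a i' ⬝ᵥ (D⁻¹ *ᵥ a s) = a s ⬝ᵥ (D⁻¹ *ᵥ a i') := by
    intro s
    rw [Matrix.dotProduct_mulVec]
    conv_lhs => rw [← hinv_symm, Matrix.vecMul_transpose]
    exact dotProduct_comm _ _
  -- expand products
  have hexp : ∀ s, Hhat g p x i s * Hhat g p x i' s
      = 1 + a i ⬝ᵥ (D⁻¹ *ᵥ a s) + a i' ⬝ᵥ (D⁻¹ *ᵥ a s)
        + (a i ⬝ᵥ (D⁻¹ *ᵥ a s)) * (a i' ⬝ᵥ (D⁻¹ *ᵥ a s)) := by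
    intro s; unfold Hhat; ring
  rw [Finset.sum_congr rfl fun s _ => hexp s]
  rw [Finset.sum_add_distrib, Finset.sum_add_distrib, Finset.sum_add_distrib]
  have hlin : ∀ v : Fin p → ℝ, ∑ s : Fin g, v ⬝ᵥ (D⁻¹ *ᵥ a s) = 0 := by
    intro v
    rw [← dot_sum, ← mulVec_sum', hsum0, Matrix.mulVec_zero, dotProduct_zero]
  have hcross : ∑ s : Fin g, (a i ⬝ᵥ (D⁻¹ *ᵥ a s)) * (a i' ⬝ᵥ (D⁻¹ *ᵥ a s))
      = (g : ℝ) * (a i ⬝ᵥ (D⁻¹ *ᵥ a i')) := by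
    have step1 : ∀ s, (a i ⬝ᵥ (D⁻¹ *ᵥ a s)) * (a i' ⬝ᵥ (D⁻¹ *ᵥ a s))
        = a i ⬝ᵥ (D⁻¹ *ᵥ (vecMulVec (a s) (a s) *ᵥ (D⁻¹ *ᵥ a i'))) := by
      intro s
      rw [hBsym s]
      have hvmv : vecMulVec (a s) (a s) *ᵥ (D⁻¹ *ᵥ a i')
          = (a s ⬝ᵥ (D⁻¹ *ᵥ a i')) • a s := by
        ext r
        simp [Matrix.mulVec, Matrix.vecMulVec_apply, dotProduct,
          Finset.mul_sum, mul_assoc, Finset.sum_mul, mul_comm]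
      rw [hvmv, Matrix.mulVec_smul, dotProduct_smul, smul_eq_mul, mul_comm]
    rw [Finset.sum_congr rfl fun s _ => step1 s]
    rw [← dot_sum, ← mulVec_sum', sum_matrix_mulVec, sum_vecMulVec g p hg x, ← hD,
      Matrix.smul_mulVec, Matrix.mulVec_smul, dotProduct_smul, smul_eq_mul,
      Matrix.mulVec_mulVec, Matrix.nonsing_inv_mul _ hDa, Matrix.one_mulVec]
  rw [hlin (a i), hlin (a i'), hcross]
  simp only [Finset.sum_const, Finset.card_univ, Fintype.card_fin, nsmul_eq_mul, add_zero]
  unfold Hhat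
  ring

lemma Hhatb_eq_Hhat (h q : ℕ) (w : Fin h → Fin q → ℝ) : Hhatb h q w = Hhat h q w := rfl

lemma Dhatb_eq_Dhat (h q : ℕ) (w : Fin h → Fin q → ℝ) : Dhatb h q w = Dhat h q w := rfl



/-- In the two-way crossed model with interaction, the cell-level linear EBLUP-error terms
`R_{ij} = ē_{ij} − g⁻¹ Σ_s Ĥ^{(a)}_{is} α_s − h⁻¹ Σ_t Ĥ^{(b)}_{jt} β_t` satisfy
`Cov(R_{ij}, R_{i'j'}) = 𝟙{i=i'}𝟙{j=j'} σe²/m + (σα²/g) Ĥ^{(a)}_{ii'}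
+ (σβ²/h) Ĥ^{(b)}_{jj'}`; in particular the cell-level terms are correlated even when
`i ≠ i'` and `j ≠ j'`. -/
theorem cell_eblup_error_covariance_interaction {Ω : Type*} [MeasureSpace Ω]
    [IsProbabilityMeasure (ℙ : Measure Ω)]
    (g h m p q : ℕ) (hg : 1 ≤ g) (hh : 1 ≤ h) (hm : 1 ≤ m) (hp : 1 ≤ p) (hq : 1 ≤ q)
    (x : Fin g → Fin p → ℝ) (hDa : IsUnit (Dhat g p x).det)
    (w : Fin h → Fin q → ℝ) (hDb : IsUnit (Dhatb h q w).det)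
    (σα2 σβ2 σe2 : ℝ) (hσα : 0 ≤ σα2) (hσβ : 0 ≤ σβ2) (hσe : 0 ≤ σe2)
    (α : Fin g → Ω → ℝ) (β : Fin h → Ω → ℝ) (e : Fin g × Fin h × Fin m → Ω → ℝ)
    (hindep : iIndepFun (Sum.elim α (Sum.elim β e)) ℙ)
    (hαL2 : ∀ s, MemLp (α s) 2 ℙ) (hβL2 : ∀ t, MemLp (β t) 2 ℙ)
    (heL2 : ∀ ijk, MemLp (e ijk) 2 ℙ)
    (hα0 : ∀ s, ∫ ω, α s ω = 0) (hβ0 : ∀ t, ∫ ω, β t ω = 0)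
    (he0 : ∀ ijk, ∫ ω, e ijk ω = 0)
    (hαvar : ∀ s, Cov (α s) (α s) = σα2) (hβvar : ∀ t, Cov (β t) (β t) = σβ2)
    (hevar : ∀ ijk, Cov (e ijk) (e ijk) = σe2) :
    ∀ (i i' : Fin g) (j j' : Fin h),
      Cov (fun ω => (m : ℝ)⁻¹ * ∑ k : Fin m, e (i, j, k) ω
              - (g : ℝ)⁻¹ * ∑ s : Fin g, Hhat g p x i s * α s ω
              - (h : ℝ)⁻¹ * ∑ t : Fin h, Hhatb h q w j t * β t ω)
          (fun ω => (m : ℝ)⁻¹ * ∑ k : Fin m, e (i', j', k) ω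
              - (g : ℝ)⁻¹ * ∑ s : Fin g, Hhat g p x i' s * α s ω
              - (h : ℝ)⁻¹ * ∑ t : Fin h, Hhatb h q w j' t * β t ω)
        = (if i = i' then if j = j' then σe2 / m else 0 else 0)
          + σα2 / g * Hhat g p x i i' + σβ2 / h * Hhatb h q w j j' := by
  classical
  intro i i' j j'
  have hgne : (g : ℝ) ≠ 0 := Nat.cast_ne_zero.mpr (by omega)
  have hhne : (h : ℝ) ≠ 0 := Nat.cast_ne_zero.mpr (by omega)
  have hmne : (m : ℝ) ≠ 0 := Nat.cast_ne_zero.mpr (by omega)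
  set Z : (Fin g ⊕ (Fin h ⊕ (Fin g × Fin h × Fin m))) → Ω → ℝ := Sum.elim α (Sum.elim β e)
    with hZ
  set coef : Fin g → Fin h → (Fin g ⊕ (Fin h ⊕ (Fin g × Fin h × Fin m))) → ℝ :=
    fun ii jj => Sum.elim (fun s => -((g : ℝ)⁻¹ * Hhat g p x ii s))
      (Sum.elim (fun t => -((h : ℝ)⁻¹ * Hhatb h q w jj t))
        (fun stk => if stk.1 = ii ∧ stk.2.1 = jj then (m : ℝ)⁻¹ else 0)) with hcoef
  have hesum : ∀ (ii : Fin g) (jj : Fin h) (ω : Ω),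
      (∑ stk : Fin g × Fin h × Fin m,
        (if stk.1 = ii ∧ stk.2.1 = jj then (m : ℝ)⁻¹ else 0) * e stk ω)
      = (m : ℝ)⁻¹ * ∑ k : Fin m, e (ii, jj, k) ω := by
    intro ii jj ω
    simp only [Fintype.sum_prod_type]
    rw [Finset.sum_eq_single ii (fun b _ hb =>
        Finset.sum_eq_zero fun t _ => Finset.sum_eq_zero fun k _ => by simp [hb])
      (by simp)]
    rw [Finset.sum_eq_single jj (fun b _ hb =>
        Finset.sum_eq_zero fun k _ => by simp [hb]) (by simp)]
    simp [Finset.mul_sum]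
  have key : ∀ (ii : Fin g) (jj : Fin h),
      (fun ω => (m : ℝ)⁻¹ * ∑ k : Fin m, e (ii, jj, k) ω
          - (g : ℝ)⁻¹ * ∑ s : Fin g, Hhat g p x ii s * α s ω
          - (h : ℝ)⁻¹ * ∑ t : Fin h, Hhatb h q w jj t * β t ω)
        = (fun ω => ∑ z, coef ii jj z * Z z ω) := by
    intro ii jj
    funext ω
    rw [Fintype.sum_sum_type, Fintype.sum_sum_type]
    simp only [hcoef, hZ, Sum.elim_inl, Sum.elim_inr]
    rw [hesum ii jj ω]
    simp only [neg_mul, Finset.sum_neg_distrib, mul_assoc]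
    rw [← Finset.mul_sum, ← Finset.mul_sum]
    ring
  rw [key i j, key i' j', cov_sum_eq Z hindep ?hL2 ?h0]
  case hL2 => rintro (s | t | stk); exacts [hαL2 s, hβL2 t, heL2 stk]
  case h0 => rintro (s | t | stk); exacts [hα0 s, hβ0 t, he0 stk]
  rw [Fintype.sum_sum_type, Fintype.sum_sum_type]
  simp only [hcoef, hZ, Sum.elim_inl, Sum.elim_inr, hαvar, hβvar, hevar]
  have hα : ∑ s : Fin g, -((g : ℝ)⁻¹ * Hhat g p x i s) * -((g : ℝ)⁻¹ * Hhat g p x i' s) * σα2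
      = σα2 / g * Hhat g p x i i' := by
    have := sum_Hhat_mul g p hg x hDa i i'
    calc ∑ s : Fin g, -((g : ℝ)⁻¹ * Hhat g p x i s) * -((g : ℝ)⁻¹ * Hhat g p x i' s) * σα2
        = ((g : ℝ)⁻¹ * (g : ℝ)⁻¹ * σα2) * ∑ s : Fin g, Hhat g p x i s * Hhat g p x i' s := by
          rw [Finset.mul_sum]; exact Finset.sum_congr rfl fun s _ => by ring
      _ = σα2 / g * Hhat g p x i i' := by rw [this]; field_simp
  have hβ : ∑ t : Fin h, -((h : ℝ)⁻¹ * Hhatb h q w j t) * -((h : ℝ)⁻¹ * Hhatb h q w j' t) * σβ2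
      = σβ2 / h * Hhatb h q w j j' := by
    have := sum_Hhat_mul h q hh w (by rw [← Dhatb_eq_Dhat]; exact hDb) j j'
    rw [Hhatb_eq_Hhat]
    calc ∑ t : Fin h, -((h : ℝ)⁻¹ * Hhat h q w j t) * -((h : ℝ)⁻¹ * Hhat h q w j' t) * σβ2
        = ((h : ℝ)⁻¹ * (h : ℝ)⁻¹ * σβ2) * ∑ t : Fin h, Hhat h q w j t * Hhat h q w j' t := by
          rw [Finset.mul_sum]; exact Finset.sum_congr rfl fun t _ => by ring
      _ = σβ2 / h * Hhat h q w j j' := by rw [this]; field_simp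
  have he : ∑ stk : Fin g × Fin h × Fin m,
      (if stk.1 = i ∧ stk.2.1 = j then (m : ℝ)⁻¹ else 0)
        * (if stk.1 = i' ∧ stk.2.1 = j' then (m : ℝ)⁻¹ else 0) * σe2
      = (if i = i' then if j = j' then σe2 / m else 0 else 0) := by
    by_cases hii : i = i'
    · by_cases hjj : j = j'
      · subst hii; subst hjj
        rw [if_pos rfl, if_pos rfl]
        simp only [Fintype.sum_prod_type]
        rw [Finset.sum_eq_single i (fun b _ hb =>
            Finset.sum_eq_zero fun t _ => Finset.sum_eq_zero fun k _ => by simp [hb])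
          (by simp)]
        rw [Finset.sum_eq_single j (fun b _ hb =>
            Finset.sum_eq_zero fun k _ => by simp [hb]) (by simp)]
        simp only [if_pos (⟨rfl, rfl⟩ : i = i ∧ j = j), and_self, if_true, Finset.sum_const,
          Finset.card_univ, Fintype.card_fin, nsmul_eq_mul]
        field_simp
      · rw [if_pos hii, if_neg hjj]
        refine Finset.sum_eq_zero fun stk _ => ?_
        obtain ⟨s, t, k⟩ := stk
        by_cases hc1 : s = i ∧ t = j
        · by_cases hc2 : s = i' ∧ t = j'
          · exact absurd (hc1.2.symm.trans hc2.2) hjj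
          · simp [hc2]
        · simp [hc1]
    · rw [if_neg hii]
      refine Finset.sum_eq_zero fun stk _ => ?_
      obtain ⟨s, t, k⟩ := stk
      by_cases hc1 : s = i ∧ t = j
      · by_cases hc2 : s = i' ∧ t = j'
        · exact absurd (hc1.1.symm.trans hc2.1) hii
        · simp [hc2]
      · simp [hc1]
  rw [hα, hβ, he]
  ring
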